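/- If the verification algorithm that iteratively checks P^{≤k} and P^{>k} for k = 0, 1, 2, ... returns 'safe' then P is safe, and if it returns 'unsafe' then P is unsafe, assuming the oracle SAFE is sound (returns 'safe' only on safe programs and 'unsafe' only on unsafe programs) and the decomposition lemma holds. -/

import Mathlib

inductive Answer where
  | isSafe | isUnsafe | isUnknown
deriving DecidableEq

/-- The verification algorithm (programs modeled as sets of feasible
counterexample traces with dimensions) returns answer `a`: at some iteration `k`,
after all earlier iterations passed (at-most part safe, at-least part unknown),
it returns either the non-safe answer on `P^{≤k}` or the non-unknown answer on
`P^{>k}`. -/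
def Returns {τ : Type*} (oracle : Set τ → Answer) (T : Set τ) (dim : τ → ℕ)
    (a : Answer) : Prop :=
  ∃ k : ℕ,
    (∀ j < k, oracle {t ∈ T | dim t ≤ j} = .isSafe ∧
              oracle {t ∈ T | dim t > j} = .isUnknown) ∧
    ((oracle {t ∈ T | dim t ≤ k} = a ∧ a ≠ .isSafe) ∨
     (oracle {t ∈ T | dim t ≤ k} = .isSafe ∧
        oracle {t ∈ T | dim t > k} = a ∧ a ≠ .isUnknown))

theorem Set.eq_empty_of_sep_eq_empty_of_sep_not_eq_empty {α : Type*} {T : Set α}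
    {p : α → Prop} (h : {t ∈ T | p t} = ∅) (h' : {t ∈ T | ¬p t} = ∅) : T = ∅ := by
  refine Set.eq_empty_of_forall_notMem fun t ht => ?_
  by_cases hp : p t
  · exact h.subset ⟨ht, hp⟩
  · exact h'.subset ⟨ht, hp⟩

theorem Set.ne_empty_of_sep_ne_empty {α : Type*} {T : Set α} {p : α → Prop}
    (h : {t ∈ T | p t} ≠ ∅) : T ≠ ∅ :=
  (Set.nonempty_iff_ne_empty.mpr h |>.mono (Set.sep_subset T p)).ne_empty

namespace Returns

variable {τ : Type*} {oracle : Set τ → Answer} {T : Set τ} {dim : τ → ℕ}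

theorem eq_empty_of_isSafe (hsafe : ∀ S : Set τ, oracle S = .isSafe → S = ∅)
    (h : Returns oracle T dim .isSafe) : T = ∅ := by
  obtain ⟨k, -, ⟨-, hne⟩ | ⟨hle, hgt, -⟩⟩ := h
  · exact absurd rfl hne
  · refine Set.eq_empty_of_sep_eq_empty_of_sep_not_eq_empty (p := fun t => dim t ≤ k)
      (hsafe _ hle) ?_
    simpa only [not_le] using hsafe _ hgt

theorem ne_empty_of_isUnsafe (hunsafe : ∀ S : Set τ, oracle S = .isUnsafe → S ≠ ∅)
    (h : Returns oracle T dim .isUnsafe) : T ≠ ∅ := by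
  obtain ⟨k, -, ⟨hle, -⟩ | ⟨-, hgt, -⟩⟩ := h
  · exact Set.ne_empty_of_sep_ne_empty (hunsafe _ hle)
  · exact Set.ne_empty_of_sep_ne_empty (hunsafe _ hgt)

end Returns

/-- Soundness of the verification algorithm, given a sound oracle. -/
theorem verify_sound {τ : Type*} (oracle : Set τ → Answer)
    (hsafe : ∀ S : Set τ, oracle S = .isSafe → S = ∅)
    (hunsafe : ∀ S : Set τ, oracle S = .isUnsafe → S ≠ ∅)
    (T : Set τ) (dim : τ → ℕ) :
    (Returns oracle T dim .isSafe → T = ∅) ∧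
    (Returns oracle T dim .isUnsafe → T ≠ ∅) :=
  ⟨Returns.eq_empty_of_isSafe hsafe, Returns.ne_empty_of_isUnsafe hunsafe⟩
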